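/- arXiv:2203.05812 — 2 statements merged into one kernel-verified Lean document; each statement's English description precedes it below -/
import Mathlib

section
/- If a finite group G acts faithfully by orientation-preserving homeomorphisms on a closed orientable surface of genus g ≥ 2 with quotient genus γ and branch indices m₁,...,m_r satisfying the Riemann–Hurwitz equation 2 - 2g = |G|(2 - 2γ - Σᵢ(1 - 1/mᵢ)) with each mᵢ ≥ 2, then |G| ≤ 84(g-1). -/
private lemma hinv (x n : ℕ) (hn : 0 < n) (hx : n ≤ x) : (1:ℚ)/x ≤ 1/n := by
  apply one_div_le_one_div_of_le
  · exact_mod_cast hn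
  · exact_mod_cast hx

private lemma key' (a b c : ℕ) (ha : 2 ≤ a) (hab : a ≤ b) (hbc : b ≤ c)
    (h : (1:ℚ)/a + 1/b + 1/c < 1) : (1:ℚ)/a + 1/b + 1/c ≤ 41/42 := by
  have hc2 : 2 ≤ c := le_trans (le_trans ha hab) hbc
  have hc0 : (0:ℚ) < c := by exact_mod_cast (by omega : 0 < c)
  have hcbound : ∀ k : ℕ, 0 < k → ((1:ℚ)/c < 1/k) → k + 1 ≤ c := by
    intro k hk hlt
    by_contra hcc
    push_neg at hcc
    have := hinv k c (by omega) (by omega)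
    linarith
  rcases Nat.lt_or_ge a 3 with ha2 | ha3
  · have haa : a = 2 := by omega
    subst haa
    rcases Nat.lt_or_ge b 5 with hb5 | hb5
    · interval_cases b
      · have hpos : (0:ℚ) < 1/c := by positivity
        push_cast at h
        linarith
      · have h7 := hinv c 7 (by norm_num)
          (hcbound 6 (by norm_num) (by push_cast at h ⊢; linarith))
        push_cast at h7 h ⊢
        linarith
      · have h5 := hinv c 5 (by norm_num)
          (hcbound 4 (by norm_num) (by push_cast at h ⊢; linarith))
        push_cast at h5 h ⊢
        linarith
    · have h1 := hinv b 5 (by norm_num) hb5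
      have h2 := hinv c 5 (by norm_num) (hb5.trans hbc)
      push_cast at h1 h2 ⊢
      linarith
  · rcases Nat.lt_or_ge b 4 with hb4 | hb4
    · have hb3 : b = 3 := by omega
      have ha3' : a = 3 := by omega
      subst hb3; subst ha3'
      have h4 := hinv c 4 (by norm_num)
        (hcbound 3 (by norm_num) (by push_cast at h ⊢; linarith))
      push_cast at h4 h ⊢
      linarith
    · have h1 := hinv a 3 (by norm_num) ha3
      have h2 := hinv b 4 (by norm_num) hb4
      have h3 := hinv c 4 (by norm_num) (hb4.trans hbc)
      push_cast at h1 h2 h3 ⊢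
      linarith

private lemma key (a b c : ℕ) (ha : 2 ≤ a) (hb : 2 ≤ b) (hc : 2 ≤ c)
    (h : (1:ℚ)/a + 1/b + 1/c < 1) : (1:ℚ)/a + 1/b + 1/c ≤ 41/42 := by
  rcases le_total a b with h1 | h1 <;> rcases le_total b c with h2 | h2 <;>
    rcases le_total a c with h3 | h3 <;>
      first
      | (have := key' a b c ha (by omega) (by omega) (by linarith); linarith)
      | (have := key' a c b ha (by omega) (by omega) (by linarith); linarith)
      | (have := key' b a c hb (by omega) (by omega) (by linarith); linarith)
      | (have := key' b c a hb (by omega) (by omega) (by linarith); linarith)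
      | (have := key' c a b hc (by omega) (by omega) (by linarith); linarith)
      | (have := key' c b a hc (by omega) (by omega) (by linarith); linarith)

/-- Hurwitz bound: if a finite group `G` acts on a closed orientable surface of genus
`g ≥ 2` with quotient genus `γ` and branch indices `m i ≥ 2` satisfying the
Riemann–Hurwitz equation, then `|G| ≤ 84 (g - 1)`. -/
theorem hurwitz_bound (G : Type*) [Group G] [Fintype G]
    (g γ r : ℕ) (hg : 2 ≤ g) (m : Fin r → ℕ) (hm : ∀ i, 2 ≤ m i)
    (hRH : (2 : ℚ) - 2 * g =
      (Fintype.card G : ℚ) * (2 - 2 * γ - ∑ i, (1 - 1 / (m i : ℚ)))) :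
    (Fintype.card G : ℚ) ≤ 84 * ((g : ℚ) - 1) := by
  have hn : (1:ℚ) ≤ (Fintype.card G : ℚ) := by exact_mod_cast Fintype.card_pos
  have hg' : (2:ℚ) ≤ (g:ℚ) := by exact_mod_cast hg
  have hterm : ∀ i, (1:ℚ)/(m i) ≤ 1/2 ∧ (0:ℚ) < 1/(m i) := by
    intro i
    constructor
    · exact hinv (m i) 2 (by norm_num) (hm i)
    · have : (0:ℚ) < (m i : ℚ) := by exact_mod_cast (by have := hm i; omega : 0 < m i)
      positivity
  have h1 : (Fintype.card G : ℚ) * (2*γ - 2 + ∑ i, (1 - 1/(m i:ℚ))) = 2*g - 2 := by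
    linear_combination hRH
  have hT0 : (0:ℚ) ≤ ∑ i, (1 - 1/(m i:ℚ)) :=
    Finset.sum_nonneg fun i _ => by linarith [(hterm i).1]
  have hSpos : (0:ℚ) < 2*γ - 2 + ∑ i, (1 - 1/(m i:ℚ)) := by
    by_contra hle
    push_neg at hle
    have := mul_nonpos_of_nonneg_of_nonpos (le_trans zero_le_one hn) hle
    linarith
  suffices hS : (1:ℚ)/42 ≤ 2*γ - 2 + ∑ i, (1 - 1/(m i:ℚ)) by
    have h2 := mul_le_mul_of_nonneg_left hS (by linarith : (0:ℚ) ≤ (Fintype.card G:ℚ))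
    rw [h1] at h2
    linarith
  rcases γ with _ | _ | γ
  · -- γ = 0
    push_cast at hSpos ⊢
    rcases r with _ | _ | _ | _ | _ | r
    · rw [Fin.sum_univ_zero] at hSpos
      linarith
    · rw [Fin.sum_univ_one] at hSpos
      linarith [(hterm 0).2]
    · rw [Fin.sum_univ_two] at hSpos
      linarith [(hterm 0).2, (hterm 1).2]
    · rw [Fin.sum_univ_three] at hSpos ⊢
      have hlt : (1:ℚ)/(m 0) + 1/(m 1) + 1/(m 2) < 1 := by linarith
      have := key (m 0) (m 1) (m 2) (hm 0) (hm 1) (hm 2) hlt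
      linarith
    · rw [Fin.sum_univ_four] at hSpos ⊢
      have h4 : ∀ i : Fin 4, (1:ℚ)/(m i) = 1/2 ∨ (1:ℚ)/(m i) ≤ 1/3 := by
        intro i
        rcases eq_or_lt_of_le (hm i) with hi | hi
        · left
          rw [← hi]
          norm_num
        · right
          exact hinv (m i) 3 (by norm_num) hi
      rcases h4 0 with h0 | h0 <;> rcases h4 1 with hb1 | hb1 <;>
        rcases h4 2 with hb2 | hb2 <;> rcases h4 3 with hb3 | hb3 <;> linarith
    · have hsum := Finset.card_nsmul_le_sum Finset.univ (fun i => 1 - 1/(m i:ℚ)) (1/2)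
        (fun i _ => by linarith [(hterm i).1])
      simp only [Finset.card_univ, Fintype.card_fin, nsmul_eq_mul] at hsum
      push_cast at hsum
      have hr : (0:ℚ) ≤ (r:ℚ) := Nat.cast_nonneg r
      linarith
  · -- γ = 1
    push_cast at hSpos ⊢
    rcases r with _ | r
    · rw [Fin.sum_univ_zero] at hSpos
      linarith
    · have hsum := Finset.card_nsmul_le_sum Finset.univ (fun i => 1 - 1/(m i:ℚ)) (1/2)
        (fun i _ => by linarith [(hterm i).1])
      simp only [Finset.card_univ, Fintype.card_fin, nsmul_eq_mul] at hsum
      push_cast at hsum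
      have hr : (0:ℚ) ≤ (r:ℚ) := Nat.cast_nonneg r
      linarith
  · -- γ ≥ 2
    push_cast
    have hγ : (0:ℚ) ≤ (γ:ℚ) := Nat.cast_nonneg γ
    linarith
end

section
/- For integers γ ≥ 0, r ≥ 0, and m₁,...,m_r ≥ 2, if the quantity μ = 2γ - 2 + Σ_{i=1}^r (1 - 1/mᵢ) is positive, then μ ≥ 1/42, with equality if and only if γ = 0, r = 3 and {m₁,m₂,m₃} = {2,3,7}. -/
lemma one_div_cast_le {k n : ℕ} (hk : 0 < k) (hkn : k ≤ n) : (1:ℚ)/n ≤ 1/k :=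
  one_div_le_one_div_of_le (by exact_mod_cast hk) (by exact_mod_cast hkn)

lemma one_div_cast_pos {n : ℕ} (hn : 0 < n) : (0:ℚ) < 1/n := by
  have : (0:ℚ) < n := by exact_mod_cast hn
  positivity

lemma sum_of_mem (a b c : ℕ) (h : ({a,b,c} : Multiset ℕ) = {2,3,7}) :
    1/(a:ℚ) + 1/b + 1/c = 1/2 + 1/3 + 1/7 := by
  have := congrArg (fun s : Multiset ℕ => (s.map (fun n : ℕ => 1/(n:ℚ))).sum) h
  simp at this
  simp only [one_div] at this ⊢
  linarith

lemma key_ordered (a b c : ℕ) (ha : 2 ≤ a) (hab : a ≤ b) (hbc : b ≤ c)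
    (hpos : (0:ℚ) < 1 - 1/a - 1/b - 1/c) :
    (1/42 : ℚ) ≤ 1 - 1/a - 1/b - 1/c ∧
    ((1 - 1/(a:ℚ) - 1/b - 1/c = 1/42) ↔ (a = 2 ∧ b = 3 ∧ c = 7)) := by
  have hb2 : 2 ≤ b := ha.trans hab
  have hc2 : 2 ≤ c := hb2.trans hbc
  by_cases ha3 : 3 ≤ a
  · have hb3 : 3 ≤ b := ha3.trans hab
    have hc3 : 3 ≤ c := hb3.trans hbc
    have h1 : (1:ℚ)/a ≤ 1/3 := by exact_mod_cast one_div_cast_le (by norm_num) ha3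
    have h2 : (1:ℚ)/b ≤ 1/3 := by exact_mod_cast one_div_cast_le (by norm_num) hb3
    by_cases hc4 : 4 ≤ c
    · have h3 : (1:ℚ)/c ≤ 1/4 := by exact_mod_cast one_div_cast_le (by norm_num) hc4
      exact ⟨by linarith, ⟨fun h => by linarith, fun h => absurd h.1 (by omega)⟩⟩
    · have haQ : (a:ℚ) = 3 := by exact_mod_cast (by omega : a = 3)
      have hbQ : (b:ℚ) = 3 := by exact_mod_cast (by omega : b = 3)
      have hcQ : (c:ℚ) = 3 := by exact_mod_cast (by omega : c = 3)
      rw [haQ, hbQ, hcQ] at hpos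
      norm_num at hpos
  · have ha2 : a = 2 := by omega
    have haQ : (a:ℚ) = 2 := by exact_mod_cast ha2
    rw [haQ] at hpos ⊢
    by_cases hb4 : 4 ≤ b
    · by_cases hb5 : 5 ≤ b
      · have hc5 : 5 ≤ c := hb5.trans hbc
        have h2 : (1:ℚ)/b ≤ 1/5 := by exact_mod_cast one_div_cast_le (by norm_num) hb5
        have h3 : (1:ℚ)/c ≤ 1/5 := by exact_mod_cast one_div_cast_le (by norm_num) hc5
        exact ⟨by linarith, ⟨fun h => by linarith, fun h => absurd h.2.1 (by omega)⟩⟩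
      · have hb' : b = 4 := by omega
        have hbQ : (b:ℚ) = 4 := by exact_mod_cast hb'
        rw [hbQ] at hpos ⊢
        have hc5 : 5 ≤ c := by
          by_contra h
          push_neg at h
          have h4 : (1:ℚ)/4 ≤ 1/c := by exact_mod_cast one_div_cast_le (k := c) (n := 4) (by omega) (by omega)
          linarith
        have h3 : (1:ℚ)/c ≤ 1/5 := by exact_mod_cast one_div_cast_le (by norm_num) hc5
        exact ⟨by linarith, ⟨fun h => by linarith, fun h => absurd h.2.1 (by omega)⟩⟩
    · by_cases hb3 : b = 3
      · have hbQ : (b:ℚ) = 3 := by exact_mod_cast hb3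
        rw [hbQ] at hpos ⊢
        have hc7 : 7 ≤ c := by
          by_contra h
          push_neg at h
          have h6 : (1:ℚ)/6 ≤ 1/c := by exact_mod_cast one_div_cast_le (k := c) (n := 6) (by omega) (by omega)
          linarith
        have h3 : (1:ℚ)/c ≤ 1/7 := by exact_mod_cast one_div_cast_le (by norm_num) hc7
        refine ⟨by linarith, ⟨fun h => ?_, ?_⟩⟩
        · have h7 : (1:ℚ)/c = 1/7 := by linarith
          have hc0 : (c:ℚ) ≠ 0 := by positivity
          field_simp at h7
          exact ⟨ha2, hb3, by exact_mod_cast h7.symm⟩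
        · rintro ⟨-, -, rfl⟩
          norm_num
      · have hb' : b = 2 := by omega
        have hbQ : (b:ℚ) = 2 := by exact_mod_cast hb'
        rw [hbQ] at hpos
        have h3 : (0:ℚ) < 1/c := one_div_cast_pos (by omega)
        linarith

lemma key3 (a b c : ℕ) (ha : 2 ≤ a) (hb : 2 ≤ b) (hc : 2 ≤ c)
    (hpos : (0:ℚ) < 1 - 1/a - 1/b - 1/c) :
    (1/42 : ℚ) ≤ 1 - 1/a - 1/b - 1/c ∧
    ((1 - 1/(a:ℚ) - 1/b - 1/c = 1/42) ↔ ({a, b, c} : Multiset ℕ) = {2,3,7}) := by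
  rcases le_total a b with h1 | h1 <;> rcases le_total b c with h2 | h2 <;>
    rcases le_total a c with h3 | h3
  · obtain ⟨hL, hE⟩ := key_ordered a b c ha h1 h2 (by linarith)
    refine ⟨by linarith, fun h => ?_, fun h => by have := sum_of_mem a b c h; linarith⟩
    obtain ⟨rfl, rfl, rfl⟩ := hE.mp (by linarith); decide
  · obtain ⟨hL, hE⟩ := key_ordered a b c ha h1 h2 (by linarith)
    refine ⟨by linarith, fun h => ?_, fun h => by have := sum_of_mem a b c h; linarith⟩
    obtain ⟨rfl, rfl, rfl⟩ := hE.mp (by linarith); decide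
  · obtain ⟨hL, hE⟩ := key_ordered a c b ha h3 h2 (by linarith)
    refine ⟨by linarith, fun h => ?_, fun h => by have := sum_of_mem a b c h; linarith⟩
    obtain ⟨rfl, rfl, rfl⟩ := hE.mp (by linarith); decide
  · obtain ⟨hL, hE⟩ := key_ordered c a b hc h3 h1 (by linarith)
    refine ⟨by linarith, fun h => ?_, fun h => by have := sum_of_mem a b c h; linarith⟩
    obtain ⟨rfl, rfl, rfl⟩ := hE.mp (by linarith); decide
  · obtain ⟨hL, hE⟩ := key_ordered b a c hb h1 h3 (by linarith)
    refine ⟨by linarith, fun h => ?_, fun h => by have := sum_of_mem a b c h; linarith⟩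
    obtain ⟨rfl, rfl, rfl⟩ := hE.mp (by linarith); decide
  · obtain ⟨hL, hE⟩ := key_ordered b c a hb h2 h3 (by linarith)
    refine ⟨by linarith, fun h => ?_, fun h => by have := sum_of_mem a b c h; linarith⟩
    obtain ⟨rfl, rfl, rfl⟩ := hE.mp (by linarith); decide
  · obtain ⟨hL, hE⟩ := key_ordered c b a hc h2 h1 (by linarith)
    refine ⟨by linarith, fun h => ?_, fun h => by have := sum_of_mem a b c h; linarith⟩
    obtain ⟨rfl, rfl, rfl⟩ := hE.mp (by linarith); decide
  · obtain ⟨hL, hE⟩ := key_ordered c b a hc h2 h1 (by linarith)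
    refine ⟨by linarith, fun h => ?_, fun h => by have := sum_of_mem a b c h; linarith⟩
    obtain ⟨rfl, rfl, rfl⟩ := hE.mp (by linarith); decide

/-- If `μ = 2γ - 2 + ∑ (1 - 1/mᵢ) > 0` then `μ ≥ 1/42`, with equality iff
`γ = 0`, `r = 3` and the multiset of the `mᵢ` is `{2, 3, 7}`. -/
theorem mu_ge_one_div_fortytwo (γ r : ℕ) (m : Fin r → ℕ) (hm : ∀ i, 2 ≤ m i)
    (hpos : (0 : ℚ) < 2 * γ - 2 + ∑ i, (1 - 1 / (m i : ℚ))) :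
    (1 / 42 : ℚ) ≤ 2 * γ - 2 + ∑ i, (1 - 1 / (m i : ℚ)) ∧
    ((2 * γ - 2 + ∑ i, (1 - 1 / (m i : ℚ)) = 1 / 42) ↔
      (γ = 0 ∧ r = 3 ∧ (Finset.univ.val.map m) = ({2, 3, 7} : Multiset ℕ))) := by
  have hterm : ∀ i, (1:ℚ)/(m i) ≤ 1/2 :=
    fun i => by exact_mod_cast one_div_cast_le (by norm_num) (hm i)
  have htpos : ∀ i, (0:ℚ) < 1/(m i) :=
    fun i => one_div_cast_pos (by have := hm i; omega)
  have hhalf : (r:ℚ) * (1/2) ≤ ∑ i, (1 - 1/(m i:ℚ)) := by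
    have h : ∑ _i : Fin r, (1/2:ℚ) ≤ ∑ i, (1 - 1/(m i:ℚ)) :=
      Finset.sum_le_sum (fun i _ => by have := hterm i; linarith)
    calc (r:ℚ)*(1/2) = ∑ _i : Fin r, (1/2:ℚ) := by
          rw [Finset.sum_const, Finset.card_univ, Fintype.card_fin, nsmul_eq_mul]
      _ ≤ _ := h
  rcases γ with _ | γ
  · -- γ = 0
    simp only [Nat.cast_zero, mul_zero, zero_sub] at hpos ⊢
    rcases r with _ | _ | _ | _ | _ | r
    · simp at hpos
      norm_num at hpos
    · rw [Fin.sum_univ_one] at hpos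
      have := htpos 0
      linarith
    · rw [Fin.sum_univ_two] at hpos
      have := htpos 0; have := htpos 1
      linarith
    · -- r = 3
      rw [Fin.sum_univ_three] at hpos ⊢
      have huniv : (Finset.univ.val.map m) = {m 0, m 1, m 2} := rfl
      obtain ⟨hL, hE⟩ := key3 (m 0) (m 1) (m 2) (hm 0) (hm 1) (hm 2) (by linarith)
      refine ⟨by linarith, fun h => ⟨by trivial, by trivial, ?_⟩, fun h => ?_⟩
      · rw [huniv]
        exact hE.mp (by linarith)
      · rw [huniv] at h
        have := hE.mpr h.2.2
        linarith
    · -- r = 4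
      rw [Fin.sum_univ_four] at hpos ⊢
      have h0 := hterm 0; have h1 := hterm 1; have h2 := hterm 2; have h3 := hterm 3
      have hex : 3 ≤ m 0 ∨ 3 ≤ m 1 ∨ 3 ≤ m 2 ∨ 3 ≤ m 3 := by
        by_contra h
        push_neg at h
        obtain ⟨e0, e1, e2, e3⟩ := h
        have q0 : ((m 0 : ℕ):ℚ) = 2 := by exact_mod_cast (by have := hm 0; omega : m 0 = 2)
        have q1 : ((m 1 : ℕ):ℚ) = 2 := by exact_mod_cast (by have := hm 1; omega : m 1 = 2)
        have q2 : ((m 2 : ℕ):ℚ) = 2 := by exact_mod_cast (by have := hm 2; omega : m 2 = 2)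
        have q3 : ((m 3 : ℕ):ℚ) = 2 := by exact_mod_cast (by have := hm 3; omega : m 3 = 2)
        rw [q0, q1, q2, q3] at hpos
        norm_num at hpos
      have hlow : (1/6 : ℚ) ≤ -2 + (1 - 1/(m 0:ℚ) + (1 - 1/(m 1:ℚ)) + (1 - 1/(m 2:ℚ)) + (1 - 1/(m 3:ℚ))) := by
        rcases hex with hi | hi | hi | hi
        · have hi3 : (1:ℚ)/(m 0) ≤ 1/3 := by exact_mod_cast one_div_cast_le (by norm_num) hi
          linarith
        · have hi3 : (1:ℚ)/(m 1) ≤ 1/3 := by exact_mod_cast one_div_cast_le (by norm_num) hi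
          linarith
        · have hi3 : (1:ℚ)/(m 2) ≤ 1/3 := by exact_mod_cast one_div_cast_le (by norm_num) hi
          linarith
        · have hi3 : (1:ℚ)/(m 3) ≤ 1/3 := by exact_mod_cast one_div_cast_le (by norm_num) hi
          linarith
      refine ⟨by linarith, fun h => by linarith, fun h => by
        exfalso; obtain ⟨-, h2, -⟩ := h; omega⟩
    · -- r ≥ 5
      have hr0 : (0:ℚ) ≤ r := by positivity
      have : ((r+5:ℕ):ℚ) * (1/2) ≤ ∑ i, (1 - 1/(m i:ℚ)) := hhalf
      push_cast at this
      refine ⟨by linarith, fun h => by linarith, fun h => by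
        exfalso; obtain ⟨-, h2, -⟩ := h; omega⟩
  · -- γ ≥ 1
    have hγ0 : (0:ℚ) ≤ (γ:ℚ) := by positivity
    rcases Nat.eq_zero_or_pos r with hr | hr
    · subst hr
      rw [Fin.sum_univ_zero] at hpos ⊢
      push_cast at hpos ⊢
      have hγ1 : (1:ℚ) ≤ γ ∨ (γ:ℚ) = 0 := by
        rcases Nat.eq_zero_or_pos γ with h | h
        · exact Or.inr (by exact_mod_cast h)
        · exact Or.inl (by exact_mod_cast h)
      rcases hγ1 with h | h
      · refine ⟨by linarith, fun h' => by linarith, fun h' => by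
          exact h'.1.elim⟩
      · rw [h] at hpos; norm_num at hpos
    · have hr1 : (1:ℚ) ≤ r := by exact_mod_cast hr
      push_cast at hpos ⊢
      refine ⟨by linarith, fun h => by linarith, fun h => by
        exact h.1.elim⟩
end
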